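/- Let M be the symmetric regular (0,1/(n−1))-biangular matrix of order N = n(n−1) constructed from a Hadamard matrix of order n and the addition table of Z_{n−1}, and define (0,1)-matrices A_0 = I_N, A_1, A_2, A_3, A_4 by M = A_0 + A_1 − A_2 + A_3 − A_4, A_1 + A_2 = (J_{n−1} − I_{n−1}) ⊗ J_n, and A_0 + A_3 + A_4 = I_{n−1} ⊗ J_n. Then {A_0, A_1, A_2, A_3, A_4} forms a symmetric association scheme of class 4. -/

import Mathlib

/-!
Let `J_n = C_1`, `D = I_{n-1} ⊗ J_n` and let `E` be the block-diagonal part of `M`. With `L_k` the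
permutation matrix of the cells holding `k` in the addition table and `Δ_k` its diagonal part,
`M = ∑ L_k ⊗ C_{e k}` and `E = ∑ Δ_k ⊗ C_{e k}`. Since `J_n` and the `C_{e k}` are `n` times a
complete family of orthogonal idempotents, `(L_k ⊗ C_{e k}) (L_l ⊗ C_{e l})` vanishes unless
`k = l`, and `L_k² = I`, `L_k Δ_k = Δ_k L_k = Δ_k² = Δ_k`; so the span of `I, J, D, M, E` is closed
under multiplication. It consists of symmetric matrices, and the defining relations make it the
span of the `A_i`. As the `A_l` are `(0,1)`-matrices with disjoint supports, the coefficient of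
`A_l` in `A_i A_j` is the `(x, y)` entry of `A_i A_j` at any position where `A_l` is `1`, i.e. the
number of `z` with `A_i x z = A_j z y = 1`.
-/

open Matrix Finset
open scoped Kronecker

section ZeroOnePartition

variable {m ι : Type*} {A : ι → Matrix m m ℝ}

theorem mul_apply_eq_card_of_zero_one [Fintype m] (h01 : ∀ i x y, A i x y = 0 ∨ A i x y = 1)
    (i j : ι) (x y : m) : (A i * A j) x y = #{z | A i x z = 1 ∧ A j z y = 1} := by
  rw [mul_apply, natCast_card_filter]
  refine sum_congr rfl fun z _ => ?_
  rcases h01 i x z with h | h <;> rcases h01 j z y with h' | h' <;> simp [h, h']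

theorem apply_eq_zero_of_apply_eq_one [Fintype ι] (h01 : ∀ i x y, A i x y = 0 ∨ A i x y = 1)
    (hJ : ∑ i, A i = of fun _ _ => 1) {k l : ι} (hkl : k ≠ l) {x y : m} (h : A l x y = 1) :
    A k x y = 0 := by
  classical
  have hsum : ∑ i ∈ univ.erase l, A i x y = 0 := by
    have := congrFun (congrFun hJ x) y
    rw [Matrix.sum_apply, ← add_sum_erase _ _ (mem_univ l), h] at this
    simpa using this
  have hnonneg : ∀ i ∈ univ.erase l, 0 ≤ A i x y := fun i _ => by
    rcases h01 i x y with h | h <;> simp [h]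
  exact (sum_eq_zero_iff_of_nonneg hnonneg).1 hsum k (mem_erase.2 ⟨hkl, mem_univ k⟩)

theorem sum_smul_apply_of_apply_eq_one [Fintype ι] (h01 : ∀ i x y, A i x y = 0 ∨ A i x y = 1)
    (hJ : ∑ i, A i = of fun _ _ => 1) (c : ι → ℝ) {l : ι} {x y : m} (h : A l x y = 1) :
    (∑ k, c k • A k) x y = c l := by
  rw [Matrix.sum_apply, sum_eq_single l (fun k _ hkl => by
    simp [apply_eq_zero_of_apply_eq_one h01 hJ hkl h]) (by simp)]
  simp [h]

theorem exists_nat_coeffs_of_mem_span [Fintype ι] (h01 : ∀ i x y, A i x y = 0 ∨ A i x y = 1)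
    (hJ : ∑ i, A i = of fun _ _ => 1) {X : Matrix m m ℝ} (hX : ∀ x y, ∃ k : ℕ, X x y = k)
    (hmem : X ∈ Submodule.span ℝ (Set.range A)) : ∃ p : ι → ℕ, X = ∑ l, (p l : ℝ) • A l := by
  obtain ⟨c, rfl⟩ := (Submodule.mem_span_range_iff_exists_fun ℝ).1 hmem
  suffices ∀ l, ∃ p : ℕ, c l • A l = (p : ℝ) • A l by
    choose p hp using this
    exact ⟨p, sum_congr rfl fun l _ => hp l⟩
  intro l
  by_cases h : ∃ x y, A l x y = 1
  · obtain ⟨x, y, hxy⟩ := h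
    obtain ⟨k, hk⟩ := hX x y
    exact ⟨k, by rw [← hk, sum_smul_apply_of_apply_eq_one h01 hJ c hxy]⟩
  · simp only [not_exists] at h
    have hzero : A l = 0 := by
      ext x y
      exact (h01 l x y).resolve_right (h x y)
    exact ⟨0, by simp [hzero]⟩

theorem exists_nat_coeffs_mul_of_mem_span [Fintype m] [Fintype ι]
    (h01 : ∀ i x y, A i x y = 0 ∨ A i x y = 1) (hJ : ∑ i, A i = of fun _ _ => 1) {i j : ι}
    (hmem : A i * A j ∈ Submodule.span ℝ (Set.range A)) :
    ∃ p : ι → ℕ, A i * A j = ∑ l, (p l : ℝ) • A l :=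
  exists_nat_coeffs_of_mem_span h01 hJ
    (fun x y => ⟨_, mul_apply_eq_card_of_zero_one h01 i j x y⟩) hmem

end ZeroOnePartition

theorem span_range_eq_span_of_relations {K V : Type*} [Field K] [CharZero K] [AddCommGroup V]
    [Module K V] (A : Fin 5 → V) {I J D M E : V} (h0 : A 0 = I) (h12 : A 1 + A 2 = J - D)
    (h034 : A 0 + A 3 + A 4 = D) (hM : M = A 0 + A 1 - A 2 + A 3 - A 4)
    (hE : E = A 0 + A 3 - A 4) :
    Submodule.span K (Set.range A) = Submodule.span K {I, J, D, M, E} := by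
  apply le_antisymm
  · set W := Submodule.span K {I, J, D, M, E}
    have hgen : ∀ v ∈ ({I, J, D, M, E} : Set V), v ∈ W := fun v hv => Submodule.subset_span hv
    simp only [Set.forall_mem_insert, Set.mem_singleton_iff, forall_eq] at hgen
    obtain ⟨hI, hJ, hD, hM', hE'⟩ := hgen
    have h1 : A 1 = (2⁻¹ : K) • (J - D + M - E) := by
      linear_combination (norm := module) (2⁻¹ : K) • h12 - (2⁻¹ : K) • hM + (2⁻¹ : K) • hE
    have h2 : A 2 = (2⁻¹ : K) • (J - D - M + E) := by
      linear_combination (norm := module) (2⁻¹ : K) • h12 + (2⁻¹ : K) • hM - (2⁻¹ : K) • hE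
    have h3 : A 3 = (2⁻¹ : K) • (D + E) - I := by
      linear_combination (norm := module) (2⁻¹ : K) • h034 - (2⁻¹ : K) • hE - h0
    have h4 : A 4 = (2⁻¹ : K) • (D - E) := by
      linear_combination (norm := module) (2⁻¹ : K) • h034 + (2⁻¹ : K) • hE
    rw [Submodule.span_le, Set.range_subset_iff]
    intro i
    fin_cases i <;> simp only [Fin.zero_eta, Fin.mk_one, Fin.reduceFinMk, SetLike.mem_coe, h0,
      h1, h2, h3, h4] <;>
      repeat' first | assumption | apply W.smul_mem | apply W.add_mem | apply W.sub_mem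
  · set U := Submodule.span K (Set.range A)
    have hA : ∀ i, A i ∈ U := fun i => Submodule.subset_span ⟨i, rfl⟩
    have hJ : J = A 1 + A 2 + (A 0 + A 3 + A 4) := by rw [h12, h034]; abel
    rw [Submodule.span_le, ← h0, hJ, ← h034, hM, hE]
    simp only [Set.insert_subset_iff, Set.singleton_subset_iff, SetLike.mem_coe]
    repeat' first | exact hA _ | constructor | apply U.add_mem | apply U.sub_mem

theorem sum_comp_eq_sum_sub_of_injective {α β M : Type*} [Fintype α] [Fintype β]
    [AddCommGroup M] {e : β → α} (he : Function.Injective e) {z : α} (hz : ∀ b, e b ≠ z)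
    (hcard : Fintype.card β + 1 = Fintype.card α) (f : α → M) :
    ∑ b, f (e b) = ∑ a, f a - f z := by
  classical
  have himage : univ.image e = univ.erase z := by
    refine eq_of_subset_of_card_le (fun a ha => ?_) ?_
    · obtain ⟨b, -, rfl⟩ := mem_image.1 ha
      exact mem_erase.2 ⟨hz b, mem_univ _⟩
    · rw [card_erase_of_mem (mem_univ z), card_image_of_injective _ he, card_univ, card_univ]
      omega
  rw [← sum_erase_eq_sub (mem_univ z), ← himage, sum_image fun a _ b _ h => he h]

theorem ones_mul_ones {R a : Type*} [NonAssocSemiring R] [Fintype a] :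
    (of fun _ _ => 1 : Matrix a a R) * of (fun _ _ => 1) =
      (Fintype.card a : R) • of fun _ _ => 1 := by
  ext i j
  simp [mul_apply]

section KroneckerSum

variable {R a b ι : Type*} [CommSemiring R] [Fintype ι]

theorem kronecker_sum (X : Matrix a a R) (Q : ι → Matrix b b R) :
    X ⊗ₖ ∑ k, Q k = ∑ k, X ⊗ₖ Q k := by
  ext ⟨i, x⟩ ⟨j, y⟩
  simp [Matrix.sum_apply, mul_sum]

variable [Fintype a] [Fintype b]

theorem sum_kronecker_mul_sum_kronecker [DecidableEq ι] (P P' : ι → Matrix a a R)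
    {Q : ι → Matrix b b R} {r : R} (hQQ : ∀ k, Q k * Q k = r • Q k)
    (hQ : ∀ k l, k ≠ l → Q k * Q l = 0) :
    (∑ k, P k ⊗ₖ Q k) * (∑ k, P' k ⊗ₖ Q k) = r • ∑ k, (P k * P' k) ⊗ₖ Q k := by
  simp_rw [sum_mul_sum, ← mul_kronecker_mul, smul_sum, ← kronecker_smul, ← hQQ]
  refine sum_congr rfl fun k _ => sum_eq_single k (fun l _ hlk => ?_) (by simp)
  rw [hQ k l hlk.symm, kronecker_zero]

theorem kronecker_mul_sum_kronecker_eq_zero (X : Matrix a a R) {Y : Matrix b b R}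
    (P : ι → Matrix a a R) {Q : ι → Matrix b b R} (hYQ : ∀ k, Y * Q k = 0) :
    X ⊗ₖ Y * ∑ k, P k ⊗ₖ Q k = 0 := by
  simp [mul_sum, ← mul_kronecker_mul, hYQ]

theorem sum_kronecker_mul_kronecker_eq_zero (X : Matrix a a R) {Y : Matrix b b R}
    (P : ι → Matrix a a R) {Q : ι → Matrix b b R} (hQY : ∀ k, Q k * Y = 0) :
    (∑ k, P k ⊗ₖ Q k) * X ⊗ₖ Y = 0 := by
  simp [sum_mul, ← mul_kronecker_mul, hQY]

end KroneckerSum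

section LatinSquare

variable {R G : Type*} [AddCommGroup G] [DecidableEq G]

/-- The cells holding `k` in the Latin square given by the addition table of `G`. -/
def latinSlice [Zero R] [One R] (k : G) : Matrix G G R :=
  of fun i j => if i + j = k then 1 else 0

def latinDiag [Zero R] [One R] (k : G) : Matrix G G R :=
  diagonal fun i => if i + i = k then 1 else 0

variable [NonAssocSemiring R] (k : G)

theorem transpose_latinSlice : (latinSlice k : Matrix G G R)ᵀ = latinSlice k := by
  ext i j
  simp [latinSlice, add_comm]

theorem transpose_latinDiag : (latinDiag k : Matrix G G R)ᵀ = latinDiag k :=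
  diagonal_transpose _

variable [Fintype G]

theorem latinSlice_mul_self : (latinSlice k * latinSlice k : Matrix G G R) = 1 := by
  ext i j
  rw [mul_apply, sum_eq_single (k - i) (fun l _ hl => by simp [latinSlice]; grind) (by simp)]
  simp [latinSlice, one_apply]
  grind

theorem latinSlice_mul_latinDiag : (latinSlice k * latinDiag k : Matrix G G R) = latinDiag k := by
  ext i j
  simp [latinSlice, latinDiag, mul_diagonal, diagonal_apply]
  grind

theorem latinDiag_mul_latinSlice : (latinDiag k * latinSlice k : Matrix G G R) = latinDiag k := by
  ext i j
  simp [latinSlice, latinDiag, diagonal_mul, diagonal_apply]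
  grind

theorem latinDiag_mul_self : (latinDiag k * latinDiag k : Matrix G G R) = latinDiag k := by
  simp [latinDiag, diagonal_mul_diagonal, ← ite_and]

theorem sum_latinSlice_kronecker_apply {m : Type*} (c : G → Matrix m m R) (i j : G) (a b : m) :
    (∑ k, latinSlice k ⊗ₖ c k) (i, a) (j, b) = c (i + j) a b := by
  simp [Matrix.sum_apply, latinSlice]

theorem sum_latinDiag_kronecker_apply {m : Type*} (c : G → Matrix m m R) (i j : G) (a b : m) :
    (∑ k, latinDiag k ⊗ₖ c k) (i, a) (j, b) = if i = j then c (i + j) a b else 0 := by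
  by_cases hij : i = j <;> simp [Matrix.sum_apply, latinDiag, hij]

end LatinSquare

section HadamardSystem

variable {R ι m : Type*} [CommRing R] [Fintype ι] [Fintype m] [DecidableEq m]

/-- The outer products `C_i = h_iᵀ h_i` of the rows of a normalized Hadamard matrix of order `r`
form such a system, with `J = C_1` and `c` enumerating the others. -/
structure IsHadamardSystem (r : R) (J : Matrix m m R) (c : ι → Matrix m m R) : Prop where
  J_mul_self : J * J = r • J
  J_mul : ∀ k, J * c k = 0
  mul_J : ∀ k, c k * J = 0
  mul_self : ∀ k, c k * c k = r • c k
  mul_of_ne : ∀ k l, k ≠ l → c k * c l = 0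
  sum_eq : ∑ k, c k = r • 1 - J

namespace IsHadamardSystem

variable {a : Type*} {r : R} {J : Matrix m m R} {c : ι → Matrix m m R}

theorem kronecker_mul_kronecker [Fintype a] (h : IsHadamardSystem r J c) (X Y : Matrix a a R) :
    X ⊗ₖ J * Y ⊗ₖ J = r • (X * Y) ⊗ₖ J := by
  rw [← mul_kronecker_mul, h.J_mul_self, kronecker_smul]

theorem one_kronecker_sum [DecidableEq a] (h : IsHadamardSystem r J c) :
    ∑ k, (1 : Matrix a a R) ⊗ₖ c k = r • 1 - 1 ⊗ₖ J := by
  rw [← kronecker_sum, h.sum_eq]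
  ext ⟨i, x⟩ ⟨j, y⟩
  by_cases hij : i = j <;> simp [hij, one_apply, mul_sub]

end IsHadamardSystem

end HadamardSystem

section BiangularScheme

variable {R G m : Type*} [CommRing R] [AddCommGroup G] [Fintype G] [DecidableEq G]
  [DecidableEq m]

/-- `I`, the all-ones matrix `J_N` (when `J` is all-ones), `I ⊗ J`, the biangular matrix `M` and
its block-diagonal part. -/
def biangularGenerators (J : Matrix m m R) (c : G → Matrix m m R) :
    Set (Matrix (G × m) (G × m) R) :=
  {1, of (fun _ _ => 1) ⊗ₖ J, 1 ⊗ₖ J, ∑ k, latinSlice k ⊗ₖ c k, ∑ k, latinDiag k ⊗ₖ c k}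

variable {r : R} {J : Matrix m m R} {c : G → Matrix m m R}

theorem transpose_eq_of_mem_span_biangularGenerators (hJ : Jᵀ = J) (hc : ∀ k, (c k)ᵀ = c k)
    {X : Matrix (G × m) (G × m) R} (hX : X ∈ Submodule.span R (biangularGenerators J c)) :
    Xᵀ = X := by
  induction hX using Submodule.span_induction with
  | mem x hx =>
    simp only [biangularGenerators, Set.mem_insert_iff, Set.mem_singleton_iff] at hx
    rcases hx with rfl | rfl | rfl | rfl | rfl
    · exact transpose_one
    · rw [← kroneckerMap_transpose, hJ]
      rfl
    · rw [← kroneckerMap_transpose, hJ, transpose_one]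
    · simp only [transpose_sum, ← kroneckerMap_transpose, hc, transpose_latinSlice]
    · simp only [transpose_sum, ← kroneckerMap_transpose, hc, transpose_latinDiag]
  | zero => exact transpose_zero
  | add x y _ _ hx hy => rw [transpose_add, hx, hy]
  | smul a x _ hx => rw [transpose_smul, hx]

theorem IsHadamardSystem.mul_mem_span_biangularGenerators [Fintype m]
    (h : IsHadamardSystem r J c) {X Y : Matrix (G × m) (G × m) R}
    (hX : X ∈ Submodule.span R (biangularGenerators J c))
    (hY : Y ∈ Submodule.span R (biangularGenerators J c)) :
    X * Y ∈ Submodule.span R (biangularGenerators J c) := by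
  set V := Submodule.span R (biangularGenerators J c)
  have hgen : ∀ x ∈ biangularGenerators J c, x ∈ V := fun x hx => Submodule.subset_span hx
  simp only [biangularGenerators, Set.forall_mem_insert, Set.mem_singleton_iff, forall_eq] at hgen
  obtain ⟨_, _, _, _, _⟩ := hgen
  have hmul : ∀ x ∈ biangularGenerators J c, ∀ y ∈ biangularGenerators J c, x * y ∈ V := by
    intro x hx y hy
    simp only [biangularGenerators, Set.mem_insert_iff, Set.mem_singleton_iff] at hx hy
    rcases hx with rfl | rfl | rfl | rfl | rfl <;> rcases hy with rfl | rfl | rfl | rfl | rfl <;>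
      simp only [one_mul, mul_one, h.kronecker_mul_kronecker, ones_mul_ones,
        kronecker_mul_sum_kronecker_eq_zero _ _ h.J_mul,
        sum_kronecker_mul_kronecker_eq_zero _ _ h.mul_J,
        sum_kronecker_mul_sum_kronecker _ _ h.mul_self h.mul_of_ne,
        latinSlice_mul_self, latinSlice_mul_latinDiag, latinDiag_mul_latinSlice,
        latinDiag_mul_self, h.one_kronecker_sum, smul_kronecker] <;>
      repeat' first | assumption | exact V.zero_mem | apply V.smul_mem | apply V.sub_mem
  have hXY := Submodule.mul_mem_mul hX hY
  rw [Submodule.span_mul_span] at hXY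
  exact Submodule.span_le.2 (Set.mul_subset_iff.2 hmul) hXY

end BiangularScheme

section BlockPartition

variable {G m : Type*} [DecidableEq G] {A : Fin 5 → Matrix (G × m) (G × m) ℝ}

theorem one_kronecker_ones :
    (1 : Matrix G G ℝ) ⊗ₖ (of fun _ _ => 1 : Matrix m m ℝ) =
      of fun x y => if x.1 = y.1 then 1 else 0 := by
  ext ⟨i, a⟩ ⟨j, b⟩
  simp [one_apply]

theorem ones_kronecker_ones_sub_one_kronecker_ones :
    (of fun _ _ => 1 : Matrix G G ℝ) ⊗ₖ (of fun _ _ => 1 : Matrix m m ℝ) -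
        (1 : Matrix G G ℝ) ⊗ₖ (of fun _ _ => 1 : Matrix m m ℝ) =
      of fun x y => if x.1 ≠ y.1 then 1 else 0 := by
  ext ⟨i, a⟩ ⟨j, b⟩
  by_cases hij : i = j <;> simp [hij]

theorem sum_fin_five_eq_ones
    (h12 : A 1 + A 2 = of fun x y : G × m => if x.1 ≠ y.1 then (1 : ℝ) else 0)
    (h034 : A 0 + A 3 + A 4 = of fun x y : G × m => if x.1 = y.1 then (1 : ℝ) else 0) :
    ∑ i, A i = of fun _ _ => 1 := by
  rw [Fin.sum_univ_five, show A 0 + A 1 + A 2 + A 3 + A 4 = A 1 + A 2 + (A 0 + A 3 + A 4) by abel,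
    h12, h034]
  ext x y
  by_cases hxy : x.1 = y.1 <;> simp [hxy]

theorem blockDiagonalPart_eq {M : Matrix (G × m) (G × m) ℝ} (hA : ∀ i x y, 0 ≤ A i x y)
    (hdecomp : M = A 0 + A 1 - A 2 + A 3 - A 4)
    (h12 : A 1 + A 2 = of fun x y : G × m => if x.1 ≠ y.1 then (1 : ℝ) else 0)
    (h034 : A 0 + A 3 + A 4 = of fun x y : G × m => if x.1 = y.1 then (1 : ℝ) else 0) :
    (of fun x y => if x.1 = y.1 then M x y else 0) = A 0 + A 3 - A 4 := by
  ext x y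
  have h12xy := congrFun (congrFun h12 x) y
  have h034xy := congrFun (congrFun h034 x) y
  have := hA 0 x y; have := hA 1 x y; have := hA 2 x y; have := hA 3 x y; have := hA 4 x y
  by_cases hxy : x.1 = y.1
  · simp only [Matrix.add_apply, of_apply, hxy, ne_eq, not_true_eq_false, if_false] at h12xy
    simp only [of_apply, hxy, if_true, hdecomp, Matrix.add_apply, Matrix.sub_apply]
    linarith
  · simp only [Matrix.add_apply, of_apply, hxy, if_false] at h034xy
    simp only [of_apply, hxy, if_false, Matrix.sub_apply, Matrix.add_apply]
    linarith

end BlockPartition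

theorem association_scheme_of_isHadamardSystem {G m : Type*} [AddCommGroup G] [Fintype G]
    [DecidableEq G] [Fintype m] [DecidableEq m] {r : ℝ} {c : G → Matrix m m ℝ}
    (hsys : IsHadamardSystem r (of fun _ _ => 1) c) (hc : ∀ k, (c k)ᵀ = c k)
    (A : Fin 5 → Matrix (G × m) (G × m) ℝ) (hA0 : A 0 = 1)
    (h01 : ∀ i x y, A i x y = 0 ∨ A i x y = 1)
    (hdecomp : ∑ k, latinSlice k ⊗ₖ c k = A 0 + A 1 - A 2 + A 3 - A 4)
    (h12 : A 1 + A 2 = of fun x y : G × m => if x.1 ≠ y.1 then (1 : ℝ) else 0)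
    (h034 : A 0 + A 3 + A 4 = of fun x y : G × m => if x.1 = y.1 then (1 : ℝ) else 0) :
    ∑ i, A i = (of fun _ _ => 1) ∧ (∀ i, (A i)ᵀ = A i) ∧
      (∀ i j, ∃ p : Fin 5 → ℕ, A i * A j = ∑ l, (p l : ℝ) • A l) ∧
      ∀ i j, A i * A j = A j * A i := by
  set S := Submodule.span ℝ (biangularGenerators (of fun _ _ => (1 : ℝ)) c)
  have hA : ∀ i x y, 0 ≤ A i x y := fun i x y => by rcases h01 i x y with h | h <;> simp [h]
  have hE : ∑ k, latinDiag k ⊗ₖ c k = A 0 + A 3 - A 4 := by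
    rw [← blockDiagonalPart_eq hA hdecomp h12 h034]
    ext ⟨i, a⟩ ⟨j, b⟩
    simp [sum_latinDiag_kronecker_apply, sum_latinSlice_kronecker_apply]
  have hspan : Submodule.span ℝ (Set.range A) = S :=
    span_range_eq_span_of_relations A hA0
      (h12.trans ones_kronecker_ones_sub_one_kronecker_ones.symm)
      (h034.trans one_kronecker_ones.symm) hdecomp hE
  have hmem : ∀ i, A i ∈ S := fun i => hspan ▸ Submodule.subset_span ⟨i, rfl⟩
  have hprod : ∀ i j, A i * A j ∈ S :=
    fun i j => hsys.mul_mem_span_biangularGenerators (hmem i) (hmem j)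
  have hsymm : ∀ X ∈ S, Xᵀ = X := fun X => transpose_eq_of_mem_span_biangularGenerators rfl hc
  have hsum := sum_fin_five_eq_ones h12 h034
  refine ⟨hsum, fun i => hsymm _ (hmem i),
    fun i j => exists_nat_coeffs_mul_of_mem_span h01 hsum (hspan ▸ hprod i j), fun i j => ?_⟩
  rw [← hsymm _ (hprod i j), transpose_mul, hsymm _ (hmem i), hsymm _ (hmem j)]

/-- The decomposition of the symmetric regular biangular matrix `M` (built from the
outer products `C_i` of a normalized Hadamard matrix of order `n` and the addition
table of `ℤ_{n-1}`) into `(0,1)`-matrices `A_0 = I, A_1, A_2, A_3, A_4` via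
`M = A_0 + A_1 - A_2 + A_3 - A_4`, `A_1 + A_2 = (J_{n-1} - I_{n-1}) ⊗ J_n` and
`A_0 + A_3 + A_4 = I_{n-1} ⊗ J_n` yields a symmetric association scheme of class 4:
the matrices sum to `J`, are all symmetric, and their products are nonnegative
integer combinations of `A_0, …, A_4` and commute. -/
theorem symmetric_association_scheme_from_biangular (n : ℕ) (hn : 2 ≤ n)
    (C : Fin n → Matrix (Fin n) (Fin n) ℝ)
    (hsymm : ∀ i, (C i)ᵀ = C i)
    (hC1 : C ⟨0, by omega⟩ = (Matrix.of fun _ _ => (1 : ℝ)))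
    (horth : ∀ i j, i ≠ j → C i * C j = 0)
    (hsq : ∀ i, C i * C i = (n : ℝ) • C i)
    (hsumC : (∑ i, C i) = (n : ℝ) • 1)
    (e : Fin (n - 1) → Fin n)
    (he : Function.Injective e)
    (he0 : ∀ a, e a ≠ ⟨0, by omega⟩)
    (M : Matrix (Fin (n - 1) × Fin n) (Fin (n - 1) × Fin n) ℝ)
    (hM : ∀ (i j : Fin (n - 1)) (a b : Fin n), M (i, a) (j, b) = C (e (i + j)) a b)
    (A : Fin 5 → Matrix (Fin (n - 1) × Fin n) (Fin (n - 1) × Fin n) ℝ)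
    (hA0 : A 0 = 1)
    (h01 : ∀ i x y, A i x y = 0 ∨ A i x y = 1)
    (hdecomp : M = A 0 + A 1 - A 2 + A 3 - A 4)
    (h12 : A 1 + A 2 = Matrix.of (fun x y : Fin (n - 1) × Fin n =>
      if x.1 ≠ y.1 then (1 : ℝ) else 0))
    (h034 : A 0 + A 3 + A 4 = Matrix.of (fun x y : Fin (n - 1) × Fin n =>
      if x.1 = y.1 then (1 : ℝ) else 0)) :
    ((∑ i, A i) = (Matrix.of fun _ _ => (1 : ℝ))) ∧
    (∀ i, (A i)ᵀ = A i) ∧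
    (∀ i j, ∃ p : Fin 5 → ℕ, A i * A j = ∑ l, (p l : ℝ) • A l) ∧
    (∀ i j, A i * A j = A j * A i) := by
  have : NeZero (n - 1) := ⟨by omega⟩
  have hsys : IsHadamardSystem (n : ℝ) (of fun _ _ => 1) fun k => C (e k) := by
    rw [← hC1]
    exact
      { J_mul_self := hsq _
        J_mul := fun k => horth _ _ (he0 k).symm
        mul_J := fun k => horth _ _ (he0 k)
        mul_self := fun k => hsq _
        mul_of_ne := fun _ _ hkl => horth _ _ (he.ne hkl)
        sum_eq := by rw [sum_comp_eq_sum_sub_of_injective he he0 (by simp; omega), hsumC] }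
  have hMc : M = ∑ k, latinSlice k ⊗ₖ C (e k) := by
    ext ⟨i, a⟩ ⟨j, b⟩
    rw [hM, sum_latinSlice_kronecker_apply]
  exact association_scheme_of_isHadamardSystem hsys (fun k => hsymm _) A hA0 h01
    (hMc ▸ hdecomp) h12 h034
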